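/- arXiv:1310.7691 — 6 statements merged into one kernel-verified Lean document; each statement's English description precedes it below -/
import Mathlib

section
/- The number of permutation polynomials over F_q of degree exactly q-2 equals (q-1)! minus the number of tuples (x_1,...,x_{q-1}) of pairwise distinct nonzero elements of F_q satisfying x_1 + ω x_2 + ω² x_3 + ... + ω^{q-2} x_{q-1} = 0, where ω is a fixed primitive element of F_q. -/
open Polynomial Finset

section PermPolyAux
variable {F : Type*} [Field F] [Fintype F]

noncomputable def permPoly (g : F → F) : F[X] :=
  ∑ a : F, C (g a) * (1 - (X - C a) ^ (Fintype.card F - 1))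

lemma permPoly_eval (g : F → F) (b : F) : (permPoly g).eval b = g b := by
  classical
  have hcard : 1 < Fintype.card F := Fintype.one_lt_card
  rw [permPoly, eval_finset_sum]
  rw [Finset.sum_eq_single b]
  · simp only [eval_mul, eval_C, eval_sub, eval_one, eval_pow, eval_X]
    rw [sub_self, zero_pow (by omega), sub_zero, mul_one]
  · intro a _ hab
    simp only [eval_mul, eval_C, eval_sub, eval_one, eval_pow, eval_X]
    rw [FiniteField.pow_card_sub_one_eq_one _ (sub_ne_zero.mpr (Ne.symm hab)), sub_self, mul_zero]
  · intro h; exact absurd (Finset.mem_univ b) h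

lemma permPoly_natDegree_le (g : F → F) :
    (permPoly g).natDegree ≤ Fintype.card F - 1 := by
  refine (Polynomial.natDegree_sum_le _ _).trans ?_
  rw [Finset.fold_max_le]
  refine ⟨Nat.zero_le _, fun a _ => ?_⟩
  refine (natDegree_C_mul_le _ _).trans ?_
  refine (natDegree_sub_le _ _).trans ?_
  simp only [natDegree_one, natDegree_pow, natDegree_X_sub_C, mul_one, max_le_iff]
  exact ⟨Nat.zero_le _, le_rfl⟩

lemma permPoly_coeff (g : F → F) (k : ℕ) (h1 : 1 ≤ k) :
    (permPoly g).coeff k =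
      -∑ a : F, g a * ((-a) ^ (Fintype.card F - 1 - k) * ((Fintype.card F - 1).choose k : F)) := by
  rw [permPoly, finset_sum_coeff, ← Finset.sum_neg_distrib]
  refine Finset.sum_congr rfl fun a _ => ?_
  rw [coeff_C_mul, coeff_sub, coeff_one, if_neg (by omega), zero_sub, mul_neg]
  congr 1
  have h : X - C a = X + C (-a) := by rw [map_neg, sub_eq_add_neg]
  rw [h, coeff_X_add_C_pow]

noncomputable def gfun [DecidableEq F] {n : ℕ} (e : Fin n ≃ {a : F // a ≠ 0}) (x : Fin n → F) : F → F :=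
  fun a => if h : a = 0 then 0 else x (e.symm ⟨a, h⟩)

lemma card_split {α : Type*} [Finite α] (P Q : α → Prop) :
    Nat.card {x // P x ∧ Q x} + Nat.card {x // P x ∧ ¬ Q x} = Nat.card {x // P x} := by
  classical
  rw [← Nat.card_sum]
  exact Nat.card_congr
    (((Equiv.subtypeSubtypeEquivSubtypeInter P Q).symm.sumCongr
      (Equiv.subtypeSubtypeEquivSubtypeInter P (fun x => ¬ Q x)).symm).trans
      (Equiv.sumCompl _))

end PermPolyAux

theorem stmt_0 {F : Type*} [Field F] [Fintype F] (q : ℕ) (hq : Fintype.card F = q)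
    (hq3 : 3 ≤ q) (ω : F) (hω : ∀ a : F, a ≠ 0 → ∃ k : ℕ, ω ^ k = a) :
    Nat.card {f : F[X] // f.natDegree = q - 2 ∧ f.coeff 0 = 0 ∧
        Function.Bijective fun x => f.eval x} =
      Nat.factorial (q - 1) -
        Nat.card {x : Fin (q - 1) → F // Function.Injective x ∧ (∀ i, x i ≠ 0) ∧
          ∑ i : Fin (q - 1), ω ^ (i : ℕ) * x i = 0} := by
  classical
  have hcharF : ((q : ℕ) : F) = 0 := by rw [← hq]; exact FiniteField.cast_card_eq_zero F
  have hq1F : ((q - 1 : ℕ) : F) = -1 := by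
    rw [Nat.cast_sub (by omega), hcharF]; push_cast; ring
  -- sum of all elements of F is zero
  have hsum_univ : ∑ a : F, a = 0 := by
    have h := FiniteField.sum_pow_lt_card_sub_one F 1 (by omega)
    simpa using h
  -- ω is nonzero
  have hω0 : ω ≠ 0 := by
    obtain ⟨a, ha0, ha1⟩ : ∃ a : F, a ≠ 0 ∧ a ≠ 1 := by
      by_contra h
      push_neg at h
      have hsub : (Finset.univ : Finset F) ⊆ {0, 1} := by
        intro a _
        simp only [Finset.mem_insert, Finset.mem_singleton]
        by_cases h0 : a = 0
        · exact Or.inl h0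
        · exact Or.inr (h a h0)
      have := Finset.card_le_card hsub
      have h2 : ({0, 1} : Finset F).card ≤ 2 := Finset.card_insert_le _ _ |>.trans (by simp)
      rw [Finset.card_univ, hq] at this
      omega
    obtain ⟨k, hk⟩ := hω a ha0
    intro h
    subst h
    rcases Nat.eq_zero_or_pos k with rfl | hk'
    · rw [pow_zero] at hk; exact ha1 hk.symm
    · rw [zero_pow (by omega)] at hk; exact ha0 hk.symm
  set u : Fˣ := Units.mk0 ω hω0 with hu_def
  have huval : (u : F) = ω := rfl
  have hu : ∀ v : Fˣ, v ∈ Subgroup.zpowers u := by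
    intro v
    obtain ⟨k, hk⟩ := hω v v.ne_zero
    refine Subgroup.mem_zpowers_iff.mpr ⟨(k : ℤ), ?_⟩
    rw [zpow_natCast]
    exact Units.ext (by rw [Units.val_pow_eq_pow_val, huval]; exact hk)
  have hord : orderOf u = q - 1 := by
    rw [orderOf_eq_card_of_forall_mem_zpowers hu, Nat.card_units, Nat.card_eq_fintype_card, hq]
  have hω_inj : ∀ i j : ℕ, i < q - 1 → j < q - 1 → ω ^ i = ω ^ j → i = j := by
    intro i j hi hj h
    have h2 : u ^ i = u ^ j := Units.ext (by
      rw [Units.val_pow_eq_pow_val, Units.val_pow_eq_pow_val, huval]; exact h)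
    have h3 := pow_inj_mod.mp h2
    rwa [hord, Nat.mod_eq_of_lt hi, Nat.mod_eq_of_lt hj] at h3
  have hω_surj : ∀ a : F, a ≠ 0 → ∃ i : Fin (q - 1), ω ^ (i : ℕ) = a := by
    intro a ha
    obtain ⟨k, hk⟩ := hω a ha
    refine ⟨⟨k % (q - 1), Nat.mod_lt _ (by omega)⟩, ?_⟩
    have h2 := congrArg (Units.val) (pow_mod_orderOf u k)
    rw [hord] at h2
    simp only [Units.val_pow_eq_pow_val, huval] at h2
    exact h2.trans hk
  -- the equivalence Fin (q-1) ≃ nonzero elements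
  set φ : Fin (q - 1) → {a : F // a ≠ 0} := fun i => ⟨ω ^ (i : ℕ), pow_ne_zero _ hω0⟩ with hφ_def
  have hφ : Function.Bijective φ := by
    constructor
    · intro i j h
      exact Fin.ext (hω_inj i j i.isLt j.isLt (congrArg Subtype.val h))
    · rintro ⟨a, ha⟩
      obtain ⟨i, hi⟩ := hω_surj a ha
      exact ⟨i, Subtype.ext hi⟩
  set e : Fin (q - 1) ≃ {a : F // a ≠ 0} := Equiv.ofBijective φ hφ with he_def
  have he_symm : ∀ (a : F) (h : a ≠ 0), ω ^ ((e.symm ⟨a, h⟩ : Fin (q - 1)) : ℕ) = a :=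
    fun a h => congrArg Subtype.val (e.apply_symm_apply ⟨a, h⟩)
  -- reindexing lemma
  have key : ∀ (x : Fin (q - 1) → F) (g : F → F), g 0 = 0 →
      (∀ i : Fin (q - 1), g (ω ^ (i : ℕ)) = x i) →
      ∑ i : Fin (q - 1), ω ^ (i : ℕ) * x i = ∑ a : F, a * g a := by
    intro x g hg0 hgx
    have h0 : ∑ a : F, a * g a = ∑ a ∈ Finset.univ.erase 0, a * g a :=
      (Finset.sum_erase _ (by rw [hg0, mul_zero])).symm
    rw [h0]
    refine Finset.sum_bij (fun i _ => ω ^ (i : ℕ)) ?_ ?_ ?_ ?_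
    · intro i _
      exact Finset.mem_erase.mpr ⟨pow_ne_zero _ hω0, Finset.mem_univ _⟩
    · intro i _ j _ h
      exact Fin.ext (hω_inj i j i.isLt j.isLt h)
    · intro a ha
      obtain ⟨i, hi⟩ := hω_surj a (Finset.mem_erase.mp ha).1
      exact ⟨i, Finset.mem_univ _, hi⟩
    · intro i _
      rw [hgx i]
  -- moment identity
  have moment : ∀ f : F[X], f.natDegree ≤ q - 2 →
      ∑ a : F, a * f.eval a = -f.coeff (q - 2) := by
    intro f hf
    have hcalc : ∑ a : F, a * f.eval a
        = ∑ j ∈ Finset.range (q - 1), f.coeff j * ∑ a : F, a ^ (j + 1) := by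
      have h1 : ∑ a : F, a * f.eval a
          = ∑ a : F, ∑ j ∈ Finset.range (q - 1), f.coeff j * a ^ (j + 1) := by
        refine Finset.sum_congr rfl fun a _ => ?_
        rw [eval_eq_sum_range' (show f.natDegree < q - 1 by omega) a, Finset.mul_sum]
        exact Finset.sum_congr rfl fun j _ => by ring
      rw [h1, Finset.sum_comm]
      exact Finset.sum_congr rfl fun j _ => (Finset.mul_sum _ _ _).symm
    rw [hcalc]
    have hsplit : q - 1 = (q - 2) + 1 := by omega
    rw [hsplit, Finset.sum_range_succ]
    have hzero : ∀ j ∈ Finset.range (q - 2), f.coeff j * ∑ a : F, a ^ (j + 1) = 0 := by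
      intro j hj
      rw [Finset.mem_range] at hj
      rw [FiniteField.sum_pow_lt_card_sub_one F (j + 1) (by omega), mul_zero]
    rw [Finset.sum_eq_zero hzero, zero_add]
    have hlast : ∑ a : F, a ^ ((q - 2) + 1) = -1 := by
      have h1 : (q - 2) + 1 = q - 1 := by omega
      rw [h1]
      have h2 : ∀ a : F, a ^ (q - 1) = if a = 0 then 0 else 1 := by
        intro a
        split
        · rename_i h; rw [h, zero_pow (by omega)]
        · rename_i h; rw [← hq]; exact FiniteField.pow_card_sub_one_eq_one a h
      rw [Finset.sum_congr rfl (fun a _ => h2 a)]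
      have h3 : ∑ a : F, (if a = 0 then (0 : F) else 1)
          = ∑ a : F, ((1 : F) - if a = 0 then 1 else 0) := by
        refine Finset.sum_congr rfl fun a _ => by split <;> simp
      rw [h3, Finset.sum_sub_distrib, Finset.sum_const, Finset.card_univ, hq]
      have h4 : ∑ a : F, (if a = 0 then (1 : F) else 0) = 1 := by
        rw [Finset.sum_ite_eq' Finset.univ (0 : F) (fun _ => (1 : F))]
        simp
      rw [h4, nsmul_eq_mul, hcharF]
      ring
    rw [hlast]
    ring
  -- coefficient computations for permPoly
  have hcoeffP1 : ∀ g : F → F, (permPoly g).coeff (q - 1) = -∑ a : F, g a := by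
    intro g
    have h := permPoly_coeff g (q - 1) (by omega)
    rw [hq] at h
    rw [h]
    congr 1
    refine Finset.sum_congr rfl fun a _ => ?_
    rw [Nat.sub_self, pow_zero, Nat.choose_self]
    push_cast
    ring
  have hcoeffP2 : ∀ g : F → F, (permPoly g).coeff (q - 2) = -∑ a : F, a * g a := by
    intro g
    have h := permPoly_coeff g (q - 2) (by omega)
    rw [hq] at h
    rw [h]
    congr 1
    refine Finset.sum_congr rfl fun a _ => ?_
    have h1 : q - 1 - (q - 2) = 1 := by omega
    have h2 : (q - 1).choose (q - 2) = q - 1 := by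
      have : q - 1 = (q - 2) + 1 := by omega
      rw [this, Nat.choose_succ_self_right]
    rw [h1, h2, pow_one, hq1F]
    ring
  have hPdeg : ∀ g : F → F, Function.Bijective g → (permPoly g).natDegree ≤ q - 2 := by
    intro g hg
    have hc1 : (permPoly g).coeff (q - 1) = 0 := by
      rw [hcoeffP1 g]
      have : ∑ a : F, g a = ∑ a : F, a := hg.sum_comp (fun a => a)
      rw [this, hsum_univ, neg_zero]
    by_contra h
    push_neg at h
    have hdeg : (permPoly g).natDegree = q - 1 := by
      have := permPoly_natDegree_le g
      rw [hq] at this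
      omega
    have h0 : permPoly g = 0 := Polynomial.leadingCoeff_eq_zero.mp (by
      rw [Polynomial.leadingCoeff, hdeg]; exact hc1)
    rw [h0, natDegree_zero] at hdeg
    omega
  -- the bijection between polynomials and tuples
  have main : Nat.card {f : F[X] // f.natDegree = q - 2 ∧ f.coeff 0 = 0 ∧
        Function.Bijective fun x => f.eval x} =
      Nat.card {x : Fin (q - 1) → F // (Function.Injective x ∧ ∀ i, x i ≠ 0) ∧
        ¬ (∑ i : Fin (q - 1), ω ^ (i : ℕ) * x i = 0)} := by
    apply Nat.card_congr
    -- properties of gfun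
    have hg0 : ∀ x : Fin (q - 1) → F, gfun e x 0 = 0 := fun x => dif_pos rfl
    have hgω : ∀ (x : Fin (q - 1) → F) (i : Fin (q - 1)), gfun e x (ω ^ (i : ℕ)) = x i := by
      intro x i
      rw [gfun, dif_neg (pow_ne_zero _ hω0)]
      congr 1
      rw [show (⟨ω ^ (i : ℕ), pow_ne_zero _ hω0⟩ : {a : F // a ≠ 0}) = e i from rfl,
        Equiv.symm_apply_apply]
    have hg_bij : ∀ x : Fin (q - 1) → F, Function.Injective x → (∀ i, x i ≠ 0) →
        Function.Bijective (gfun e x) := by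
      intro x hxinj hx0
      refine Finite.injective_iff_bijective.mp ?_
      intro a b hab
      by_cases ha : a = 0 <;> by_cases hb : b = 0
      · rw [ha, hb]
      · exfalso; simp only [gfun] at hab; rw [dif_pos ha, dif_neg hb] at hab; exact hx0 _ hab.symm
      · exfalso; simp only [gfun] at hab; rw [dif_neg ha, dif_pos hb] at hab; exact hx0 _ hab
      · simp only [gfun] at hab; rw [dif_neg ha, dif_neg hb] at hab
        have h1 := hxinj hab
        have h2 : e.symm ⟨a, ha⟩ = e.symm ⟨b, hb⟩ := h1
        rw [← he_symm a ha, ← he_symm b hb, h2]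
    -- forward map is well-defined
    have mapsΦ : ∀ f : {f : F[X] // f.natDegree = q - 2 ∧ f.coeff 0 = 0 ∧
        Function.Bijective fun x => f.eval x},
        ((Function.Injective fun i : Fin (q - 1) => f.1.eval (ω ^ (i : ℕ))) ∧
        (∀ i : Fin (q - 1), f.1.eval (ω ^ (i : ℕ)) ≠ 0)) ∧
        ¬ (∑ i : Fin (q - 1), ω ^ (i : ℕ) * f.1.eval (ω ^ (i : ℕ)) = 0) := by
      rintro ⟨f, hdeg, hc0, hbij⟩
      refine ⟨⟨?_, ?_⟩, ?_⟩
      · intro i j h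
        exact Fin.ext (hω_inj i j i.isLt j.isLt (hbij.injective h))
      · intro i h
        have h0 : f.eval 0 = 0 := by rw [← Polynomial.coeff_zero_eq_eval_zero, hc0]
        have := hbij.injective (h.trans h0.symm)
        exact pow_ne_zero _ hω0 this
      · intro h
        have h1 : ∑ i : Fin (q - 1), ω ^ (i : ℕ) * f.eval (ω ^ (i : ℕ))
            = ∑ a : F, a * f.eval a := by
          refine key _ _ ?_ (fun i => rfl)
          rw [← Polynomial.coeff_zero_eq_eval_zero, hc0]
        rw [h1, moment f (le_of_eq hdeg)] at h
        have hfne : f ≠ 0 := by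
          intro h0
          rw [h0, natDegree_zero] at hdeg
          omega
        have : f.coeff (q - 2) ≠ 0 := by
          rw [← hdeg]
          exact Polynomial.leadingCoeff_ne_zero.mpr hfne
        exact this (neg_eq_zero.mp h)
    -- backward map is well-defined
    have mapsΨ : ∀ x : {x : Fin (q - 1) → F // (Function.Injective x ∧ ∀ i, x i ≠ 0) ∧
        ¬ (∑ i : Fin (q - 1), ω ^ (i : ℕ) * x i = 0)},
        (permPoly (gfun e x.1)).natDegree = q - 2 ∧ (permPoly (gfun e x.1)).coeff 0 = 0 ∧
        Function.Bijective fun y => (permPoly (gfun e x.1)).eval y := by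
      rintro ⟨x, ⟨hxinj, hx0⟩, hxsum⟩
      have hgb := hg_bij x hxinj hx0
      have hsum2 : ∑ i : Fin (q - 1), ω ^ (i : ℕ) * x i = ∑ a : F, a * gfun e x a :=
        key x _ (hg0 x) (hgω x)
      have hcne : (permPoly (gfun e x)).coeff (q - 2) ≠ 0 := by
        rw [hcoeffP2, ← hsum2]
        exact neg_ne_zero.mpr hxsum
      refine ⟨le_antisymm (hPdeg _ hgb) (le_natDegree_of_ne_zero hcne), ?_, ?_⟩
      · rw [Polynomial.coeff_zero_eq_eval_zero, permPoly_eval, hg0]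
      · have : (fun y => (permPoly (gfun e x)).eval y) = gfun e x := funext (permPoly_eval _)
        rw [this]
        exact hgb
    refine ⟨fun f => ⟨fun i => f.1.eval (ω ^ (i : ℕ)), mapsΦ f⟩,
      fun x => ⟨permPoly (gfun e x.1), mapsΨ x⟩, ?_, ?_⟩
    · rintro ⟨f, hdeg, hc0, hbij⟩
      apply Subtype.ext
      show permPoly (gfun e fun i => f.eval (ω ^ (i : ℕ))) = f
      have hgf : ∀ a : F, gfun e (fun i => f.eval (ω ^ (i : ℕ))) a = f.eval a := by
        intro a
        by_cases ha : a = 0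
        · rw [ha, hg0, ← Polynomial.coeff_zero_eq_eval_zero, hc0]
        · rw [gfun, dif_neg ha]
          show f.eval (ω ^ ((e.symm ⟨a, ha⟩ : Fin (q - 1)) : ℕ)) = f.eval a
          rw [he_symm a ha]
      have hzero : permPoly (gfun e fun i => f.eval (ω ^ (i : ℕ))) - f = 0 := by
        apply Polynomial.eq_zero_of_natDegree_lt_card_of_eval_eq_zero _ (Function.injective_id)
        · intro a
          rw [eval_sub, permPoly_eval, hgf, sub_self]
        · have h1 := permPoly_natDegree_le (F := F) (gfun e fun i => f.eval (ω ^ (i : ℕ)))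
          rw [hq] at h1
          have h2 := Polynomial.natDegree_sub_le
            (permPoly (gfun e fun i => f.eval (ω ^ (i : ℕ)))) f
          have h3 : f.natDegree = q - 2 := hdeg
          rw [hq]
          exact lt_of_le_of_lt h2 (max_lt (by omega) (by omega))
      exact sub_eq_zero.mp hzero
    · rintro ⟨x, hx⟩
      apply Subtype.ext
      funext i
      show (permPoly (gfun e x)).eval (ω ^ (i : ℕ)) = x i
      rw [permPoly_eval, hgω]
  -- counting the full set of injective nonzero tuples
  have hT : Nat.card {x : Fin (q - 1) → F // Function.Injective x ∧ ∀ i, x i ≠ 0}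
      = Nat.factorial (q - 1) := by
    have e2 : {x : Fin (q - 1) → F // Function.Injective x ∧ ∀ i, x i ≠ 0}
        ≃ (Fin (q - 1) ↪ {a : F // a ≠ 0}) :=
      { toFun := fun x => ⟨fun i => ⟨x.1 i, x.2.2 i⟩, fun i j h => x.2.1 (congrArg Subtype.val h)⟩
        invFun := fun f => ⟨fun i => (f i : F),
          fun i j h => f.injective (Subtype.ext h), fun i => (f i).2⟩
        left_inv := fun x => rfl
        right_inv := fun f => rfl }
    rw [Nat.card_congr e2, Nat.card_eq_fintype_card, Fintype.card_embedding_eq]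
    have hcard_ne : Fintype.card {a : F // a ≠ 0} = q - 1 := by
      rw [Fintype.card_subtype_compl, Fintype.card_subtype_eq, hq]
    rw [hcard_ne, Fintype.card_fin, Nat.descFactorial_self]
  -- split the count
  have hsplit : Nat.card {x : Fin (q - 1) → F // (Function.Injective x ∧ ∀ i, x i ≠ 0) ∧
        ∑ i : Fin (q - 1), ω ^ (i : ℕ) * x i = 0} +
      Nat.card {x : Fin (q - 1) → F // (Function.Injective x ∧ ∀ i, x i ≠ 0) ∧
        ¬ (∑ i : Fin (q - 1), ω ^ (i : ℕ) * x i = 0)} =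
      Nat.card {x : Fin (q - 1) → F // Function.Injective x ∧ ∀ i, x i ≠ 0} :=
    card_split _ _
  have hconv : Nat.card {x : Fin (q - 1) → F // Function.Injective x ∧ (∀ i, x i ≠ 0) ∧
      ∑ i : Fin (q - 1), ω ^ (i : ℕ) * x i = 0}
      = Nat.card {x : Fin (q - 1) → F // (Function.Injective x ∧ ∀ i, x i ≠ 0) ∧
        ∑ i : Fin (q - 1), ω ^ (i : ℕ) * x i = 0} :=
    Nat.card_congr (Equiv.subtypeEquivRight (fun x => by tauto))
  rw [main, hconv]
  exact Nat.eq_sub_of_add_eq' (hsplit.trans hT)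
end

section
/- Fix a generator ω of F_q^×. For each k with 0 ≤ k ≤ q-2, the number of tuples (x_1,...,x_{q-1}) of pairwise distinct nonzero elements of F_q with x_1 + ω x_2 + ... + ω^{q-2} x_{q-1} = ω^k is independent of k. That is, for all j, k, the counts for right-hand sides ω^j and ω^k are equal. -/
lemma scale_card {F : Type*} [Field F] (n : ℕ) (ω c a : F) (hc : c ≠ 0) :
    Nat.card {x : Fin n → F // Function.Injective x ∧ (∀ i, x i ≠ 0) ∧
        ∑ i : Fin n, ω ^ (i : ℕ) * x i = a} =
      Nat.card {x : Fin n → F // Function.Injective x ∧ (∀ i, x i ≠ 0) ∧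
        ∑ i : Fin n, ω ^ (i : ℕ) * x i = c * a} := by
  apply Nat.card_congr
  refine ⟨fun x => ⟨fun i => c * x.1 i, ?_, ?_, ?_⟩,
          fun y => ⟨fun i => c⁻¹ * y.1 i, ?_, ?_, ?_⟩, ?_, ?_⟩
  · intro i i' h
    exact x.2.1 (mul_left_cancel₀ hc h)
  · exact fun i => mul_ne_zero hc (x.2.2.1 i)
  · simp only [mul_left_comm _ c, ← Finset.mul_sum, x.2.2.2]
  · intro i i' h
    exact y.2.1 (mul_left_cancel₀ (inv_ne_zero hc) h)
  · exact fun i => mul_ne_zero (inv_ne_zero hc) (y.2.2.1 i)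
  · simp only [mul_left_comm _ c⁻¹, ← Finset.mul_sum, y.2.2.2]
    field_simp
  · intro x
    ext i
    simp [hc]
  · intro y
    ext i
    simp [hc]

theorem stmt_1 {F : Type*} [Field F] [Fintype F] (q : ℕ) (hq : Fintype.card F = q)
    (ω : F) (hω : ∀ a : F, a ≠ 0 → ∃ k : ℕ, ω ^ k = a) (j k : ℕ)
    (hj : j ≤ q - 2) (hk : k ≤ q - 2) :
    Nat.card {x : Fin (q - 1) → F // Function.Injective x ∧ (∀ i, x i ≠ 0) ∧
        ∑ i : Fin (q - 1), ω ^ (i : ℕ) * x i = ω ^ j} =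
      Nat.card {x : Fin (q - 1) → F // Function.Injective x ∧ (∀ i, x i ≠ 0) ∧
        ∑ i : Fin (q - 1), ω ^ (i : ℕ) * x i = ω ^ k} := by
  by_cases hω0 : ω = 0
  · -- then every nonzero element is 1, so q = 2 and j = k = 0
    have h2 : q ≤ 2 := by
      classical
      have hsub : (Finset.univ : Finset F) ⊆ {0, 1} := by
        intro a _
        by_cases ha : a = 0
        · simp [ha]
        · obtain ⟨m, hm⟩ := hω a ha
          rw [hω0] at hm
          rcases m with _ | m
          · simp at hm; simp [← hm]
          · simp at hm; simp [← hm]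
      calc q = (Finset.univ : Finset F).card := by rw [← hq]; rfl
        _ ≤ ({0, 1} : Finset F).card := Finset.card_le_card hsub
        _ ≤ 2 := Finset.card_insert_le _ _ |>.trans (by simp)
    have hj0 : j = 0 := by omega
    have hk0 : k = 0 := by omega
    rw [hj0, hk0]
  · have hc : ω ^ k * (ω ^ j)⁻¹ ≠ 0 :=
      mul_ne_zero (pow_ne_zero _ hω0) (inv_ne_zero (pow_ne_zero _ hω0))
    have := scale_card (q - 1) ω (ω ^ k * (ω ^ j)⁻¹) (ω ^ j) hc
    rwa [mul_assoc, inv_mul_cancel₀ (pow_ne_zero _ hω0), mul_one] at this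
end

section
/- Let c_{-1} be the number of tuples (x_1,...,x_{q-1}) of pairwise distinct nonzero elements of F_q with x_1 + ω x_2 + ... + ω^{q-2} x_{q-1} = 0, and let c_0 be the number of such tuples whose sum equals 1. Then c_{-1} + (q-1)·c_0 = (q-1)!. -/
theorem stmt_2 {F : Type*} [Field F] [Fintype F] (q : ℕ) (hq : Fintype.card F = q)
    (ω : F) (hω : ∀ a : F, a ≠ 0 → ∃ k : ℕ, ω ^ k = a) :
    Nat.card {x : Fin (q - 1) → F // Function.Injective x ∧ (∀ i, x i ≠ 0) ∧
        ∑ i : Fin (q - 1), ω ^ (i : ℕ) * x i = 0} +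
      (q - 1) * Nat.card {x : Fin (q - 1) → F // Function.Injective x ∧ (∀ i, x i ≠ 0) ∧
        ∑ i : Fin (q - 1), ω ^ (i : ℕ) * x i = 1} = Nat.factorial (q - 1) := by
  classical
  set n := q - 1 with hn
  set N : F → ℕ := fun s => Nat.card {x : Fin n → F // Function.Injective x ∧
      (∀ i, x i ≠ 0) ∧ ∑ i : Fin n, ω ^ (i : ℕ) * x i = s} with hNdef
  -- Step 1: sum over all s equals count of injective nonzero tuples
  have h1 : ∑ s : F, N s =
      Nat.card {x : Fin n → F // Function.Injective x ∧ (∀ i, x i ≠ 0)} := by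
    have hsig : Nat.card (Σ s : F, {x : Fin n → F // Function.Injective x ∧
        (∀ i, x i ≠ 0) ∧ ∑ i : Fin n, ω ^ (i : ℕ) * x i = s}) = ∑ s : F, N s := by
      simp [hNdef, Nat.card_eq_fintype_card, Fintype.card_sigma]
    rw [← hsig]
    refine Nat.card_congr (Equiv.symm ⟨fun x => ⟨∑ i : Fin n, ω ^ (i : ℕ) * x.1 i,
      x.1, x.2.1, x.2.2, rfl⟩, fun y => ⟨y.2.1, y.2.2.1, y.2.2.2.1⟩, fun x => rfl, ?_⟩)
    rintro ⟨s, x, hx1, hx2, hx3⟩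
    subst hx3
    rfl
  -- Step 2: total count is n!
  have hcardne : Fintype.card {a : F // a ≠ 0} = n := by
    have : Fintype.card {a : F // a ≠ 0} = Fintype.card F - Fintype.card {a : F // a = 0} :=
      Fintype.card_subtype_compl _
    rw [this, Fintype.card_subtype_eq (0 : F), hq]
  have h2 : Nat.card {x : Fin n → F // Function.Injective x ∧ (∀ i, x i ≠ 0)} =
      Nat.factorial n := by
    have e : {x : Fin n → F // Function.Injective x ∧ (∀ i, x i ≠ 0)} ≃
        (Fin n ↪ {a : F // a ≠ 0}) :=
      { toFun := fun x => ⟨fun i => ⟨x.1 i, x.2.2 i⟩,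
          fun i j h => x.2.1 (congrArg Subtype.val h)⟩
        invFun := fun e => ⟨fun i => (e i).1,
          fun i j h => e.injective (Subtype.ext h), fun i => (e i).2⟩
        left_inv := fun x => rfl
        right_inv := fun e => rfl }
    rw [Nat.card_congr e, Nat.card_eq_fintype_card, Fintype.card_embedding_eq,
      Fintype.card_fin, hcardne, Nat.descFactorial_self]
  -- Step 3: for s ≠ 0, N s = N 1
  have h3 : ∀ s : F, s ≠ 0 → N s = N 1 := by
    intro s hs
    refine Nat.card_congr ⟨fun x => ⟨fun i => s⁻¹ * x.1 i, ?_, ?_, ?_⟩,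
      fun y => ⟨fun i => s * y.1 i, ?_, ?_, ?_⟩, ?_, ?_⟩
    · intro i j h
      exact x.2.1 (by simpa [hs] using mul_left_cancel₀ (inv_ne_zero hs) h)
    · intro i
      exact mul_ne_zero (inv_ne_zero hs) (x.2.2.1 i)
    · have : ∑ i : Fin n, ω ^ (i : ℕ) * (s⁻¹ * x.1 i)
          = s⁻¹ * ∑ i : Fin n, ω ^ (i : ℕ) * x.1 i := by
        rw [Finset.mul_sum]; congr 1; ext i; ring
      rw [this, x.2.2.2, inv_mul_cancel₀ hs]
    · intro i j h
      exact y.2.1 (mul_left_cancel₀ hs h)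
    · intro i
      exact mul_ne_zero hs (y.2.2.1 i)
    · have : ∑ i : Fin n, ω ^ (i : ℕ) * (s * y.1 i)
          = s * ∑ i : Fin n, ω ^ (i : ℕ) * y.1 i := by
        rw [Finset.mul_sum]; congr 1; ext i; ring
      rw [this, y.2.2.2, mul_one]
    · intro x
      ext i
      simp [mul_assoc, hs]
    · intro y
      ext i
      simp [mul_assoc, inv_mul_cancel₀ hs, hs]
  -- Step 4: combine
  have h4 : ∑ s : F, N s = N 0 + (q - 1) * N 1 := by
    rw [← Finset.add_sum_erase Finset.univ N (Finset.mem_univ (0 : F))]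
    congr 1
    rw [Finset.sum_congr rfl (fun s hs => h3 s (Finset.ne_of_mem_erase hs)),
      Finset.sum_const, smul_eq_mul]
    congr 1
    rw [Finset.card_erase_of_mem (Finset.mem_univ _), Finset.card_univ, hq]
  have := h4.symm.trans (h1.trans h2)
  exact this
end

section
/- Let p be prime, ζ = e^{2πi/p}, and let V be the (p-1)×(p-1) Vandermonde matrix with V_{ij} = ζ^{ij} (1 ≤ i,j ≤ p-1). Then |per(V)|² ≤ (1 + (p-2)p^{p-1})/(p-1). -/
/-!
Expanding `per (A Aᴴ)` over all maps `f : n → n` and symmetrising over the column permutations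
gives `N! · per (A Aᴴ) = ∑_f |per A_f|²`, where `A_f` has columns `A_{f 1}, …, A_{f N}`; the terms
with `f` a permutation already contribute `N! · |per A|²`, so `|per A|² ≤ per (A Aᴴ)`.
For the Vandermonde matrix of the `p`-th roots of unity, orthogonality of characters gives
`V Vᴴ = p I - J`, whose permanent is `a_N(p) = ∑ᵢ (-1)ⁱ N!/(N-i)! p^(N-i)` with `N = p - 1`.
The recursion `a_{N+1} = x^{N+1} - (N+1) a_N` keeps `0 ≤ a_N(x) ≤ x^N` for `x ≥ N`, and two
more steps of it bound `a_{p-1}(p)` by the stated quantity.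
-/

open Finset Equiv
open scoped Nat Matrix

theorem sum_fin_pow_succ_of_pow_eq_one {K : Type*} [Field K] [DecidableEq K] {w : K} {p : ℕ}
    (hp : p ≠ 0) (hw : w ^ p = 1) :
    ∑ j : Fin (p - 1), w ^ ((j : ℕ) + 1) = if w = 1 then (p : K) - 1 else -1 := by
  have hsplit : ∑ j ∈ range p, w ^ j = ∑ j : Fin (p - 1), w ^ ((j : ℕ) + 1) + 1 := by
    rw [Fin.sum_univ_eq_sum_range (fun j => w ^ (j + 1)), ← pow_zero w, ← sum_range_succ',
      Nat.sub_add_cancel (Nat.one_le_iff_ne_zero.mpr hp)]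
  split_ifs with h1
  · simp only [h1, one_pow, sum_const, card_range, card_univ, Fintype.card_fin, nsmul_one]
      at hsplit ⊢
    linear_combination -hsplit
  · rw [geom_sum_eq h1, hw, sub_self, zero_div] at hsplit
    linear_combination -hsplit

theorem card_perm_fixing_compl {n : Type*} [DecidableEq n] [Fintype n] (s : Finset n) :
    #{σ : Perm n | ∀ i ∉ s, σ i = i} = (#s)! := by
  rw [← Fintype.card_subtype, ← Fintype.card_coe s, ← Fintype.card_perm]
  exact Fintype.card_congr (Perm.subtypeEquivSubtypePerm (· ∈ s)).symm

namespace Matrix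

variable {n R : Type*} [DecidableEq n] [Fintype n]

section CommSemiring

variable [CommSemiring R]

theorem sum_perm_prod_comp_eq_permanent_submatrix (A : Matrix n n R) (f : n → n) :
    ∑ σ : Perm n, ∏ i, A i (f (σ i)) = (A.submatrix id f).permanent := by
  rw [← permanent_transpose]
  rfl

theorem permanent_smul_one_add_const (c d : R) :
    (c • (1 : Matrix n n R) + of fun _ _ => d).permanent =
      ∑ i ∈ range (Fintype.card n + 1), (Fintype.card n).descFactorial i * d ^ i *
        c ^ (Fintype.card n - i) := by
  have hprod (σ : Perm n) : ∏ i, (d + if σ i = i then c else 0) =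
      ∑ s ∈ univ.powerset, d ^ #s * if ∀ i ∉ s, σ i = i then c ^ (Fintype.card n - #s) else 0 := by
    rw [prod_add]
    simp_rw [prod_ite_zero, prod_const, card_univ_sdiff, mem_sdiff, mem_univ, true_and]
  simp only [permanent, add_apply, smul_apply, one_apply, of_apply, smul_eq_mul, mul_ite, mul_one,
    mul_zero, add_comm _ d, hprod]
  rw [sum_comm]
  simp_rw [sum_ite, sum_const_zero, add_zero, sum_const, card_perm_fixing_compl]
  rw [sum_powerset_apply_card (fun m => m ! • (d ^ m * c ^ (Fintype.card n - m)))]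
  simp_rw [card_univ, Nat.descFactorial_eq_factorial_mul_choose, smul_smul, nsmul_eq_mul]
  push_cast
  refine sum_congr rfl fun m _ => by ring

end CommSemiring

section StarRing

variable [CommSemiring R] [StarRing R]

theorem permanent_mul_conjTranspose (A : Matrix n n R) :
    (A * Aᴴ).permanent = ∑ f : n → n, star (∏ i, A i (f i)) * (A.submatrix id f).permanent := by
  simp only [permanent, mul_apply, conjTranspose_apply, prod_univ_sum, Fintype.piFinset_univ,
    prod_mul_distrib, star_prod, submatrix_apply, id]
  rw [sum_comm]
  simp_rw [mul_sum, mul_comm]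

theorem factorial_mul_permanent_mul_conjTranspose (A : Matrix n n R) :
    (Fintype.card n)! * (A * Aᴴ).permanent =
      ∑ f : n → n, star (A.submatrix id f).permanent * (A.submatrix id f).permanent := by
  have hcomp (σ : Perm n) : (A * Aᴴ).permanent =
      ∑ f : n → n, star (∏ i, A i (f (σ i))) * (A.submatrix id f).permanent := by
    rw [permanent_mul_conjTranspose, ← (σ.symm.arrowCongr (Equiv.refl n)).sum_comp]
    refine sum_congr rfl fun f _ => ?_
    simp only [arrowCongr_apply, symm_symm, coe_refl, Function.id_comp]
    exact congrArg _ (permanent_permute_rows σ (A.submatrix id f))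
  rw [← Fintype.card_perm, ← nsmul_eq_mul, ← card_univ, ← sum_const,
    sum_congr rfl fun σ _ => hcomp σ, sum_comm]
  simp_rw [← sum_mul, ← star_sum, sum_perm_prod_comp_eq_permanent_submatrix]

end StarRing

theorem norm_sq_permanent_le_re_permanent_mul_conjTranspose (A : Matrix n n ℂ) :
    ‖A.permanent‖ ^ 2 ≤ (A * Aᴴ).permanent.re := by
  have hsum : ((Fintype.card n)! : ℝ) * (A * Aᴴ).permanent.re =
      ∑ f : n → n, ‖(A.submatrix id f).permanent‖ ^ 2 := by
    have := congrArg Complex.re (factorial_mul_permanent_mul_conjTranspose A)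
    simpa [Complex.re_sum, Complex.star_def, Complex.conj_mul', ← Complex.ofReal_pow] using this
  have hperms : ∑ σ : Perm n, ‖(A.submatrix id σ).permanent‖ ^ 2 =
      (Fintype.card n)! * ‖A.permanent‖ ^ 2 := by
    simp [permanent_permute_rows, Fintype.card_perm]
  have hle : ∑ σ : Perm n, ‖(A.submatrix id σ).permanent‖ ^ 2 ≤
      ∑ f : n → n, ‖(A.submatrix id f).permanent‖ ^ 2 :=
    (sum_map univ ⟨((⇑) : Perm n → n → n), DFunLike.coe_injective⟩
      fun f => ‖(A.submatrix id f).permanent‖ ^ 2).symm.trans_le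
      (sum_le_univ_sum_of_nonneg fun _ => by positivity)
  exact le_of_mul_le_mul_left (hperms ▸ hsum ▸ hle) (by positivity)

theorem mul_conjTranspose_eq_of_isPrimitiveRoot {ζ : ℂ} {p : ℕ} (hζ : IsPrimitiveRoot ζ p)
    (V : Matrix (Fin (p - 1)) (Fin (p - 1)) ℂ)
    (hV : ∀ i j, V i j = ζ ^ (((i : ℕ) + 1) * ((j : ℕ) + 1))) :
    V * Vᴴ = (p : ℂ) • 1 + of fun _ _ => -1 := by
  ext i k
  have hp : p ≠ 0 := by have := i.isLt; omega
  have hstar : star ζ = ζ⁻¹ := (Complex.inv_eq_conj (hζ.norm'_eq_one hp)).symm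
  set w := ζ ^ ((i : ℕ) + 1) * star ζ ^ ((k : ℕ) + 1) with hw_def
  have hterm (j : Fin (p - 1)) : V i j * star (V k j) = w ^ ((j : ℕ) + 1) := by
    rw [hV, hV, star_pow, pow_mul, pow_mul, mul_pow]
  have hw : w ^ p = 1 := by
    rw [mul_pow, ← pow_mul, ← pow_mul, mul_comm _ p, mul_comm _ p, pow_mul, pow_mul, hζ.pow_eq_one,
      ← star_pow, hζ.pow_eq_one, star_one, one_pow, one_pow, one_mul]
  have hw1 : w = 1 ↔ i = k := by
    rw [hw_def, hstar, inv_pow, mul_inv_eq_one₀ (pow_ne_zero _ (hζ.ne_zero hp)), Fin.ext_iff]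
    constructor
    · intro h
      have := hζ.pow_inj (by omega) (by omega) h
      omega
    · intro h
      rw [h]
  simp only [mul_apply, conjTranspose_apply, hterm, sum_fin_pow_succ_of_pow_eq_one hp hw, hw1,
    Matrix.add_apply, Matrix.smul_apply, one_apply, of_apply]
  split_ifs <;> simp [sub_eq_add_neg]

end Matrix

def altDescFactorialSum (N : ℕ) (x : ℝ) : ℝ :=
  ∑ i ∈ range (N + 1), N.descFactorial i * (-1) ^ i * x ^ (N - i)

theorem altDescFactorialSum_zero (x : ℝ) : altDescFactorialSum 0 x = 1 := by
  simp [altDescFactorialSum]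

theorem altDescFactorialSum_succ (N : ℕ) (x : ℝ) :
    altDescFactorialSum (N + 1) x = x ^ (N + 1) - (N + 1) * altDescFactorialSum N x := by
  rw [altDescFactorialSum, sum_range_succ', altDescFactorialSum, mul_sum, sub_eq_add_neg,
    ← sum_neg_distrib, add_comm]
  refine congrArg₂ _ (by simp) (sum_congr rfl fun i _ => ?_)
  rw [Nat.succ_descFactorial_succ, Nat.add_sub_add_right]
  push_cast
  ring

theorem altDescFactorialSum_nonneg_and_le {N : ℕ} {x : ℝ} (hx : N ≤ x) :
    0 ≤ altDescFactorialSum N x ∧ altDescFactorialSum N x ≤ x ^ N := by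
  induction N with
  | zero => simp [altDescFactorialSum_zero]
  | succ N ih =>
    push_cast at hx
    obtain ⟨h0, hle⟩ := ih (by linarith)
    have hxN : 0 ≤ x ^ N := pow_nonneg (by linarith [N.cast_nonneg (α := ℝ)]) N
    rw [altDescFactorialSum_succ, pow_succ]
    constructor <;> nlinarith

theorem altDescFactorialSum_le {p : ℕ} (hp : 2 ≤ p) :
    altDescFactorialSum (p - 1) p ≤ (1 + (p - 2) * (p : ℝ) ^ (p - 1)) / (p - 1) := by
  obtain ⟨m, rfl⟩ : ∃ m, p = m + 2 := ⟨p - 2, by omega⟩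
  rcases m with _ | _ | m
  · norm_num [altDescFactorialSum, sum_range_succ]
  · norm_num [altDescFactorialSum, sum_range_succ]
  · rw [show m + 1 + 1 + 2 - 1 = m + 1 + 1 + 1 by omega, altDescFactorialSum_succ,
      altDescFactorialSum_succ]
    set x : ℝ := ((m + 1 + 1 + 2 : ℕ) : ℝ)
    have hx4 : x = m + 4 := by push_cast [x]; ring
    obtain ⟨-, hle⟩ := altDescFactorialSum_nonneg_and_le (N := m + 1) (x := x) (by
      rw [hx4]; push_cast; linarith)
    have hy : 1 ≤ x ^ (m + 1) := one_le_pow₀ (by linarith [(m.cast_nonneg : (0 : ℝ) ≤ m)])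
    rw [le_div_iff₀ (by linarith [(m.cast_nonneg : (0 : ℝ) ≤ m)])]
    push_cast
    set y := x ^ (m + 1)
    have hm : (m : ℝ) = x - 4 := by linarith
    rw [show m + 2 + 1 = m + 1 + 1 + 1 by ring, pow_succ, pow_succ, hm]
    nlinarith [mul_le_mul_of_nonneg_left hle (by nlinarith : 0 ≤ (x - 1) ^ 2 * (x - 2)),
      mul_nonneg (by linarith : 0 ≤ y) (mul_nonneg (by linarith : 0 ≤ x) (by linarith : 0 ≤ x - 4))]

open Complex

theorem stmt_7 (p : ℕ) (hp : p.Prime)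
    (ζ : ℂ) (hζ : ζ = Complex.exp (2 * Real.pi * Complex.I / p))
    (V : Matrix (Fin (p - 1)) (Fin (p - 1)) ℂ)
    (hV : ∀ i j, V i j = ζ ^ (((i : ℕ) + 1) * ((j : ℕ) + 1))) :
    ‖V.permanent‖ ^ 2 ≤ (1 + (p - 2) * (p : ℝ) ^ (p - 1)) / (p - 1) := by
  have hprim : IsPrimitiveRoot ζ p := hζ ▸ isPrimitiveRoot_exp p hp.ne_zero
  calc ‖V.permanent‖ ^ 2 ≤ (V * Vᴴ).permanent.re :=
        V.norm_sq_permanent_le_re_permanent_mul_conjTranspose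
    _ = altDescFactorialSum (p - 1) p := by
      rw [V.mul_conjTranspose_eq_of_isPrimitiveRoot hprim hV, Matrix.permanent_smul_one_add_const,
        Fintype.card_fin, ← ofReal_re (altDescFactorialSum (p - 1) p), altDescFactorialSum]
      push_cast
      rfl
    _ ≤ (1 + (p - 2) * (p : ℝ) ^ (p - 1)) / (p - 1) := altDescFactorialSum_le hp.two_le
end

section
/- With N_q(q-2) the number of permutation polynomials of F_q of degree q-2 with f(0)=0, one has the bounds (1 - 1/q)((q-1)! - q^{q/2}/(q-1)) ≤ N_q(q-2) ≤ (1 - 1/q)((q-1)! + q^{q/2}/(q-1)). -/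
/-!
Interpolating a permutation `σ` of `F` gives a polynomial of degree `< q` whose `X^(q-1)`
coefficient is `-∑ σ(x) = 0` and whose `X^(q-2)` coefficient is `-W σ`, where
`W σ = ∑ x σ(x)`; so `N_q(q-2)` counts the permutations fixing `0` with `W σ ≠ 0`.
Multiplying values by `v ≠ 0` scales `W` by `v`, and translating values leaves `W` unchanged,
so with `c_v = #{σ | W σ = v}` one gets `N_q(q-2) = (1 - 1/q)((q-1)! - (c₀ - c₁)/q)`.
For a nontrivial additive character `ψ`, `c₀ - c₁ = ∑_σ ψ(W σ)` is the permanent of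
`V = (ψ(xy))_{x,y}`, and `V Vᴴ = q • 1` gives `‖per V‖² ≤ per (V Vᴴ) = q^q`.
-/

open Polynomial Finset

namespace FiniteField

variable {F : Type*} [Field F] [Fintype F]

theorem sum_pow_card_sub_one_eq_neg_one : ∑ x : F, x ^ (Fintype.card F - 1) = -1 := by
  classical
  have hpow (x : F) : x ^ (Fintype.card F - 1) = if x ≠ 0 then 1 else 0 := by
    split_ifs with hx
    · exact pow_card_sub_one_eq_one x hx
    · rw [not_not.mp hx, zero_pow (by have := Fintype.one_lt_card (α := F); omega)]
  simp only [hpow, sum_boole, filter_ne', card_erase_of_mem (mem_univ _), card_univ,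
    Nat.cast_sub Fintype.card_pos, cast_card_eq_zero, Nat.cast_one, zero_sub]

theorem sum_eval_eq_neg_coeff {f : F[X]} (hf : f.natDegree < Fintype.card F) :
    ∑ x, f.eval x = -f.coeff (Fintype.card F - 1) := by
  have hq := Fintype.card_pos (α := F)
  calc ∑ x, f.eval x = ∑ i ∈ range (Fintype.card F), f.coeff i * ∑ x : F, x ^ i := by
        simp only [eval_eq_sum_range' hf, mul_sum]
        exact sum_comm
    _ = f.coeff (Fintype.card F - 1) * ∑ x : F, x ^ (Fintype.card F - 1) := by
        refine sum_eq_single_of_mem _ (mem_range.2 (by omega)) fun i hi hne => ?_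
        rw [sum_pow_lt_card_sub_one (K := F) i (by rw [mem_range] at hi; omega), mul_zero]
    _ = _ := by rw [sum_pow_card_sub_one_eq_neg_one, mul_neg_one]

theorem sum_mul_eval_eq_neg_coeff {f : F[X]} (hf : f.natDegree ≤ Fintype.card F - 2) :
    ∑ x, x * f.eval x = -f.coeff (Fintype.card F - 2) := by
  have hq := Fintype.one_lt_card (α := F)
  have hXf : (X * f).natDegree < Fintype.card F := by
    have := natDegree_mul_le (p := (X : F[X])) (q := f)
    rw [natDegree_X] at this
    omega
  have hX (x : F) : x * f.eval x = (X * f).eval x := by rw [eval_mul, eval_X]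
  rw [sum_congr rfl fun x _ => hX x, sum_eval_eq_neg_coeff hXf,
    show Fintype.card F - 1 = Fintype.card F - 2 + 1 by omega, coeff_X_mul]

theorem sum_univ_eq_zero (hq : 2 < Fintype.card F) : ∑ x : F, x = 0 := by
  simpa using sum_pow_lt_card_sub_one (K := F) 1 (by omega)

end FiniteField

lemma AddChar.map_sum_eq_prod {A M ι : Type*} [AddCommMonoid A] [CommMonoid M]
    (ψ : AddChar A M) (s : Finset ι) (f : ι → A) :
    ψ (∑ i ∈ s, f i) = ∏ i ∈ s, ψ (f i) := by
  induction s using Finset.cons_induction with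
  | empty => simp
  | cons a s ha ih => rw [sum_cons, prod_cons, map_add_eq_mul, ih]

namespace Matrix

variable {n 𝕜 : Type*} [Fintype n] [DecidableEq n] [RCLike 𝕜]

lemma sum_prod_mul_star_prod (M : Matrix n n 𝕜) (σ τ : Equiv.Perm n) :
    ∑ j : n → n, (∏ i, M (σ i) (j i)) * star (∏ i, M (τ i) (j i)) =
      ∏ i, (M * Mᴴ) (σ i) (τ i) := by
  simp only [star_prod, ← prod_mul_distrib, mul_apply, conjTranspose_apply]
  exact (Fintype.prod_sum fun i u => M (σ i) u * star (M (τ i) u)).symm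

theorem sum_norm_sq_permanent_submatrix (M : Matrix n n 𝕜) :
    ∑ j : n → n, (‖(M.submatrix id j).permanent‖ ^ 2 : 𝕜) =
      (Fintype.card n).factorial * (M * Mᴴ).permanent := by
  have hrow (σ : Equiv.Perm n) :
      ∑ τ : Equiv.Perm n, ∏ i, (M * Mᴴ) (σ i) (τ i) = (M * Mᴴ).permanent := by
    rw [← permanent_permute_cols σ, ← permanent_transpose]
    rfl
  simp_rw [← RCLike.mul_conj, permanent, submatrix_apply, id, RCLike.star_def.symm, star_sum,
    sum_mul_sum, sum_comm (γ := n → n), sum_prod_mul_star_prod, hrow]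
  simp [Fintype.card_perm, permanent]

/-- Among the maps `j : n → n` in `sum_norm_sq_permanent_submatrix`, each permutation
contributes `‖M.permanent‖ ^ 2`. -/
theorem norm_sq_permanent_le (M : Matrix n n 𝕜) :
    ‖M.permanent‖ ^ 2 ≤ RCLike.re (M * Mᴴ).permanent := by
  have hfac : (0 : ℝ) < (Fintype.card n).factorial := by positivity
  refine le_of_mul_le_mul_left ?_ hfac
  calc (Fintype.card n).factorial * ‖M.permanent‖ ^ 2
      = ∑ π : Equiv.Perm n, ‖(M.submatrix id π).permanent‖ ^ 2 := by
        simp [permanent_permute_rows, Fintype.card_perm]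
    _ ≤ ∑ j : n → n, ‖(M.submatrix id j).permanent‖ ^ 2 := by
        refine (sum_map univ ⟨_, DFunLike.coe_injective⟩ fun j : n → n =>
          ‖(M.submatrix id j).permanent‖ ^ 2).symm.trans_le ?_
        exact sum_le_univ_sum_of_nonneg fun _ => by positivity
    _ = RCLike.re (∑ j : n → n, (‖(M.submatrix id j).permanent‖ ^ 2 : 𝕜)) := by
        simp only [map_sum, ← RCLike.ofReal_pow, RCLike.ofReal_re]
    _ = _ := by
        rw [sum_norm_sq_permanent_submatrix]
        simp

end Matrix

namespace Equiv.Perm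

variable {F : Type*} [Field F] [Fintype F]

def weightedSum (σ : Perm F) : F := ∑ x, x * σ x

lemma weightedSum_addRight_mul (σ : Perm F) (b : F) :
    weightedSum (Equiv.addRight b * σ) = weightedSum σ + (∑ x, x) * b := by
  simp only [weightedSum, mul_apply, coe_addRight, mul_add, sum_add_distrib, sum_mul]

lemma weightedSum_mulLeft₀_mul (σ : Perm F) {v : F} (hv : v ≠ 0) :
    weightedSum (Equiv.mulLeft₀ v hv * σ) = v * weightedSum σ := by
  simp only [weightedSum, mul_apply, mulLeft₀_apply, mul_sum, mul_left_comm]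

variable [DecidableEq F]

lemma card_weightedSum_eq_of_ne_zero {v : F} (hv : v ≠ 0) :
    #{σ : Perm F | weightedSum σ = v} = #{σ : Perm F | weightedSum σ = 1} := by
  refine (card_equiv (Equiv.mulLeft (Equiv.mulLeft₀ v hv)) fun σ => ?_).symm
  simp [weightedSum_mulLeft₀_mul, hv]

lemma card_weightedSum_eq_zero_add_mul_card_eq_one :
    #{σ : Perm F | weightedSum σ = 0} + (Fintype.card F - 1) * #{σ : Perm F | weightedSum σ = 1}
      = (Fintype.card F).factorial := by
  have hsum := sum_card_fiberwise_eq_card_filter univ univ (weightedSum (F := F))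
  simp only [mem_univ, filter_true, card_univ, Fintype.card_perm] at hsum
  rw [← hsum, ← add_sum_erase _ _ (mem_univ 0), sum_congr rfl fun v hv =>
      card_weightedSum_eq_of_ne_zero (ne_of_mem_erase hv), sum_const,
    card_erase_of_mem (mem_univ _), card_univ, smul_eq_mul]

lemma card_weightedSum_ne_zero :
    #{σ : Perm F | weightedSum σ ≠ 0}
      = (Fintype.card F - 1) * #{σ : Perm F | weightedSum σ = 1} := by
  have h := card_filter_add_card_filter_not (s := univ) (fun σ : Perm F => weightedSum σ = 0)
  simp only [card_univ, Fintype.card_perm, ← card_weightedSum_eq_zero_add_mul_card_eq_one] at h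
  exact Nat.add_left_cancel h

lemma card_mul_card_fix_zero_weightedSum_ne_zero (hq : 2 < Fintype.card F) :
    Fintype.card F * #{σ : Perm F | σ 0 = 0 ∧ weightedSum σ ≠ 0}
      = (Fintype.card F - 1) * #{σ : Perm F | weightedSum σ = 1} := by
  rw [← card_weightedSum_ne_zero]
  have hfiber (b : F) : #{σ ∈ {σ : Perm F | weightedSum σ ≠ 0} | σ 0 = b}
      = #{σ : Perm F | σ 0 = 0 ∧ weightedSum σ ≠ 0} := by
    refine (card_equiv (Equiv.mulLeft (Equiv.addRight b)) fun σ => ?_).symm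
    simp [weightedSum_addRight_mul, FiniteField.sum_univ_eq_zero hq, and_comm]
  have hsum := sum_card_fiberwise_eq_card_filter {σ : Perm F | weightedSum σ ≠ 0} univ (· 0)
  simp only [mem_univ, filter_true] at hsum
  rw [← hsum, sum_congr rfl fun b _ => hfiber b, sum_const, card_univ, smul_eq_mul]

lemma sum_addChar_weightedSum {R : Type*} [CommRing R] [IsDomain R] {ψ : AddChar F R}
    (hψ : ψ ≠ 1) :
    ∑ σ : Perm F, ψ (weightedSum σ)
      = #{σ : Perm F | weightedSum σ = 0} - #{σ : Perm F | weightedSum σ = 1} := by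
  calc ∑ σ : Perm F, ψ (weightedSum σ)
      = ∑ v, (#{σ : Perm F | weightedSum σ = v} : R) * ψ v := by
        rw [← sum_fiberwise univ weightedSum]
        refine sum_congr rfl fun v _ => ?_
        rw [sum_congr rfl fun σ hσ => by rw [(mem_filter.1 hσ).2], sum_const, nsmul_eq_mul]
    _ = #{σ : Perm F | weightedSum σ = 0} * ψ 0
          + ∑ v ∈ univ.erase 0, (#{σ : Perm F | weightedSum σ = 1} : R) * ψ v := by
        rw [← add_sum_erase _ _ (mem_univ 0)]
        congr 1
        refine sum_congr rfl fun v hv => ?_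
        rw [card_weightedSum_eq_of_ne_zero (ne_of_mem_erase hv)]
    _ = _ := by
        rw [← mul_sum, sum_erase_eq_sub (mem_univ _), AddChar.sum_eq_zero_of_ne_one hψ,
          AddChar.map_zero_eq_one]
        ring

end Equiv.Perm

section AddCharMatrix

open Matrix Equiv.Perm

variable {F R : Type*} [Field F] [Fintype F] [DecidableEq F] [CommRing R]

def addCharMatrix (ψ : AddChar F R) : Matrix F F R := of fun x y => ψ (x * y)

lemma permanent_addCharMatrix (ψ : AddChar F R) :
    (addCharMatrix ψ).permanent = ∑ σ : Equiv.Perm F, ψ (weightedSum σ) := by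
  simp only [permanent, addCharMatrix, of_apply, weightedSum, AddChar.map_sum_eq_prod, mul_comm]

lemma addCharMatrix_mul_conjTranspose {ψ : AddChar F ℂ} (hψ : ψ.IsPrimitive) :
    addCharMatrix ψ * (addCharMatrix ψ)ᴴ = (Fintype.card F : ℂ) • 1 := by
  have hchar : 0 < ringChar F := Nat.pos_of_ne_zero (CharP.ringChar_ne_zero_of_finite F)
  ext x y
  simp only [Matrix.mul_apply, conjTranspose_apply, addCharMatrix, of_apply, RCLike.star_def,
    AddChar.starComp_apply hchar, AddChar.inv_apply, ← AddChar.map_add_eq_mul,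
    Matrix.smul_apply, Matrix.one_apply, smul_eq_mul, mul_ite, mul_one, mul_zero]
  rw [sum_congr rfl fun u _ => congrArg ψ (by ring : x * u + -(y * u) = u * (x - y)),
    AddChar.sum_mulShift _ hψ]
  simp [sub_eq_zero]

theorem abs_card_weightedSum_sub_le :
    |(#{σ : Equiv.Perm F | weightedSum σ = 0} : ℝ) - #{σ : Equiv.Perm F | weightedSum σ = 1}|
      ≤ (Fintype.card F : ℝ) ^ ((Fintype.card F : ℝ) / 2) := by
  have hψ := AddChar.FiniteField.primitiveChar_to_Complex_isPrimitive F
  have hψ₁ : AddChar.FiniteField.primitiveChar_to_Complex F ≠ 1 := by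
    simpa using hψ one_ne_zero
  have h := norm_sq_permanent_le (addCharMatrix (AddChar.FiniteField.primitiveChar_to_Complex F))
  rw [addCharMatrix_mul_conjTranspose hψ, permanent_smul, permanent_one,
    permanent_addCharMatrix, sum_addChar_weightedSum hψ₁, mul_one, ← Nat.cast_pow,
    RCLike.natCast_re] at h
  rw [div_eq_mul_one_div, Real.rpow_mul (Nat.cast_nonneg _), Real.rpow_natCast,
    ← Real.sqrt_eq_rpow]
  refine Real.abs_le_sqrt ?_
  rw [← sq_abs]
  exact_mod_cast h

end AddCharMatrix

section PermutationPolynomial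

open Equiv.Perm

variable {F : Type*} [Field F] [Fintype F]

lemma natDegree_eq_card_sub_two_iff (hq : 2 < Fintype.card F) {f : F[X]}
    (hf : f.natDegree < Fintype.card F) {σ : Equiv.Perm F} (hσ : ∀ x, f.eval x = σ x) :
    f.natDegree = Fintype.card F - 2 ↔ weightedSum σ ≠ 0 := by
  have htop : f.coeff (Fintype.card F - 1) = 0 := by
    have h := FiniteField.sum_eval_eq_neg_coeff hf
    rw [sum_congr rfl fun x _ => hσ x, Equiv.sum_comp σ (fun x => x),
      FiniteField.sum_univ_eq_zero hq, zero_eq_neg] at h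
    exact h
  have hle : f.natDegree ≤ Fintype.card F - 2 :=
    natDegree_le_pred (Nat.le_sub_one_of_lt hf) htop
  have hsum : weightedSum σ = -f.coeff (Fintype.card F - 2) := by
    rw [← FiniteField.sum_mul_eval_eq_neg_coeff hle]
    exact sum_congr rfl fun x _ => by rw [hσ]
  rw [hsum, neg_ne_zero]
  refine ⟨fun hdeg => ?_, natDegree_eq_of_le_of_coeff_ne_zero hle⟩
  have hf0 : f ≠ 0 := by rintro rfl; rw [natDegree_zero] at hdeg; omega
  rw [← hdeg]
  exact leadingCoeff_ne_zero.mpr hf0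

theorem card_permPolynomial_eq (hq : 2 < Fintype.card F) [DecidableEq F] :
    Nat.card {f : F[X] // f.natDegree = Fintype.card F - 2 ∧ f.coeff 0 = 0 ∧
        Function.Bijective fun x => f.eval x}
      = #{σ : Equiv.Perm F | σ 0 = 0 ∧ weightedSum σ ≠ 0} := by
  have hlt {f : F[X]} (hf : f.natDegree = Fintype.card F - 2) : f.natDegree < Fintype.card F := by
    omega
  rw [← Fintype.card_subtype]
  refine .trans ?_ Nat.card_eq_fintype_card
  refine Nat.card_eq_of_bijective
    (fun f => ⟨Equiv.ofBijective _ f.2.2.2, by simpa [coeff_zero_eq_eval_zero] using f.2.2.1,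
      (natDegree_eq_card_sub_two_iff hq (hlt f.2.1) fun _ => rfl).mp f.2.1⟩) ⟨?_, ?_⟩
  · rintro ⟨f, hf⟩ ⟨g, hg⟩ hfg
    have hfg' (x : F) : f.eval x = g.eval x :=
      congrArg (fun σ : Equiv.Perm F => σ x) (congrArg Subtype.val hfg)
    exact Subtype.ext (eq_of_natDegree_lt_card_of_eval_eq f g Function.injective_id hfg'
      (max_lt (hlt hf.1) (hlt hg.1)))
  · rintro ⟨σ, hσ0, hσ⟩
    set f := Lagrange.interpolate univ id σ
    have hfσ (x : F) : f.eval x = σ x :=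
      Lagrange.eval_interpolate_at_node σ Function.injective_id.injOn (mem_univ x)
    have hf : f.natDegree < Fintype.card F :=
      (natDegree_le_of_degree_le
        (Lagrange.degree_interpolate_le σ Function.injective_id.injOn)).trans_lt (by simp; omega)
    refine ⟨⟨f, (natDegree_eq_card_sub_two_iff hq hf hfσ).mpr hσ, ?_, ?_⟩, ?_⟩
    · rw [coeff_zero_eq_eval_zero, hfσ, hσ0]
    · simpa only [hfσ] using σ.bijective
    · exact Subtype.ext (Equiv.ext hfσ)

end PermutationPolynomial

lemma le_and_le_of_abs_sub_le {Q N c₀ c₁ f B : ℝ} (hQ : 1 < Q) (hN : Q * N = (Q - 1) * c₁)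
    (hc : c₀ + (Q - 1) * c₁ = Q * f) (hδ : |c₀ - c₁| ≤ B) :
    (1 - 1 / Q) * (f - B / (Q - 1)) ≤ N ∧ N ≤ (1 - 1 / Q) * (f + B / (Q - 1)) := by
  have hQ0 : 0 < Q := by linarith
  have hNeq : N = (1 - 1 / Q) * (f - (c₀ - c₁) / Q) := by
    field_simp
    linear_combination Q * hN + (Q - 1) * hc
  have hscale : |(c₀ - c₁) / Q| ≤ B / (Q - 1) := by
    rw [abs_div, abs_of_pos hQ0]
    exact div_le_div₀ ((abs_nonneg _).trans hδ) hδ (by linarith) (by linarith)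
  have hfac : 0 ≤ 1 - 1 / Q := by rw [sub_nonneg, div_le_one hQ0]; exact hQ.le
  obtain ⟨hlow, hupp⟩ := abs_le.mp hscale
  rw [hNeq]
  exact ⟨mul_le_mul_of_nonneg_left (by linarith) hfac,
    mul_le_mul_of_nonneg_left (by linarith) hfac⟩

theorem stmt_11 {F : Type*} [Field F] [Fintype F] (q : ℕ) (hq : Fintype.card F = q)
    (hq3 : 3 ≤ q) :
    (1 - 1 / (q : ℝ)) * (Nat.factorial (q - 1) - (q : ℝ) ^ ((q : ℝ) / 2) / ((q : ℝ) - 1)) ≤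
      (Nat.card {f : F[X] // f.natDegree = q - 2 ∧ f.coeff 0 = 0 ∧
        Function.Bijective fun x => f.eval x} : ℝ) ∧
    (Nat.card {f : F[X] // f.natDegree = q - 2 ∧ f.coeff 0 = 0 ∧
        Function.Bijective fun x => f.eval x} : ℝ) ≤
      (1 - 1 / (q : ℝ)) * (Nat.factorial (q - 1) + (q : ℝ) ^ ((q : ℝ) / 2) / ((q : ℝ) - 1)) := by
  classical
  subst hq
  have hq1 : 1 ≤ Fintype.card F := by omega
  rw [card_permPolynomial_eq hq3]
  refine le_and_le_of_abs_sub_le (by exact_mod_cast (by omega : 1 < Fintype.card F)) ?_ ?_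
    abs_card_weightedSum_sub_le
  · rw [← Nat.cast_one, ← Nat.cast_sub hq1]
    exact_mod_cast Equiv.Perm.card_mul_card_fix_zero_weightedSum_ne_zero hq3
  · rw [← Nat.cast_one, ← Nat.cast_sub hq1]
    exact_mod_cast Equiv.Perm.card_weightedSum_eq_zero_add_mul_card_eq_one.trans
      (Nat.mul_factorial_pred (by omega)).symm
end

section
/- Let 1 ≤ d ≤ q-3 and m = q-1-d. The number G_q(d) of tuples (x_1,...,x_{q-1}) of pairwise distinct nonzero elements of F_q satisfying simultaneously Σ_{i=1}^{q-1} ω^{(i-1)l} x_i = 0 for every l = 1, 2, ..., m equals the number of permutations σ ∈ S_{q-1} such that Σ_{i=1}^{q-1} ω^{(i-1)l} ω^{σ(i)} = 0 for all l = 1, ..., m; and N_q(d) = (q-1)! - Σ_{e=d+1}^{q-2} N_q(e) - G_q(d). -/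
/-!
Put `q = |F|`. Every map `F → F` is interpolated by a unique polynomial of degree `< q`, and
for a permutation fixing `0` that polynomial has degree `≤ q - 2`, because
`∑ₐ aˡ f(a) = -[X^(q-1-l)] f` (for `l < q - 1`) and `∑ₐ f(a) = ∑ₐ a = 0`. Hence the tuples
`xᵢ = f(ωⁱ)` of distinct nonzero values are in bijection with the permutation polynomials
`f` with `f(0) = 0` and `1 ≤ deg f ≤ q - 2`, and the same identity, read at the nonzero points
`a = ωⁱ`, turns the `l`-th linear condition on `x` into the vanishing of the coefficient of
`X^(q-1-l)`. The conditions for `l = 1, …, m` therefore say exactly `deg f < d`, so the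
constrained tuples number `∑_{e < d} N_q(e)`, while all tuples number
`(q-1)! = ∑_{e ≤ q-2} N_q(e)` by reindexing `xᵢ = ω^{σ(i)}`.
-/

open Polynomial Finset Function

theorem card_injective_eq_card_perm {α β : Type*} [Finite α] {s : β → Prop}
    (e : α ≃ {b // s b}) (P : (α → β) → Prop) :
    Nat.card {x : α → β // Injective x ∧ (∀ i, s (x i)) ∧ P x} =
      Nat.card {σ : Equiv.Perm α // P fun i => e (σ i)} := by
  refine (Nat.card_congr (Equiv.ofBijective (fun σ => ⟨fun i => e (σ.1 i),
    fun i j h => σ.1.injective (e.injective (Subtype.ext h)), fun i => (e _).2, σ.2⟩)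
    ⟨fun σ τ h => ?_, fun x => ?_⟩)).symm
  · exact Subtype.ext (Equiv.ext fun i =>
      e.injective (Subtype.ext (congrFun (congrArg Subtype.val h) i)))
  · obtain ⟨x, hinj, hs, hP⟩ := x
    have hbij : Bijective fun i => e.symm ⟨x i, hs i⟩ :=
      Finite.injective_iff_bijective.1 fun i j h => hinj (by simpa using h)
    have hx : (fun i => (e (Equiv.ofBijective _ hbij i) : β)) = x := by
      ext i
      simp
    exact ⟨⟨Equiv.ofBijective _ hbij, by rw [hx]; exact hP⟩, Subtype.ext hx⟩

theorem exists_bijective_extend_of_injective {α β : Type*} [Finite β] {b₀ : β}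
    (e : α ≃ {b // b ≠ b₀}) {x : α → β} (hx : Injective x) (hx₀ : ∀ i, x i ≠ b₀) :
    ∃ g : β → β, Bijective g ∧ g b₀ = b₀ ∧ ∀ i, g (e i) = x i := by
  classical
  let g b := if h : b = b₀ then b₀ else x (e.symm ⟨b, h⟩)
  have hg (i : α) : g (e i) = x i := by simp [g, (e i).2]
  refine ⟨g, Finite.injective_iff_bijective.1 fun a b h => ?_, by simp [g], hg⟩
  by_cases ha : a = b₀ <;> by_cases hb : b = b₀
  · rw [ha, hb]
  · exact absurd (by simpa [g, ha, hb] using h.symm) (hx₀ _)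
  · exact absurd (by simpa [g, ha, hb] using h) (hx₀ _)
  · simp only [g, ha, hb, dite_false] at h
    simpa using hx h

theorem Finset.add_sum_Icc_add_sum_Icc_eq {M : Type*} [AddCommMonoid M] (f : ℕ → M)
    {d n : ℕ} (hd : 1 ≤ d) (hdn : d ≤ n) :
    f d + ∑ e ∈ Icc (d + 1) n, f e + ∑ e ∈ Icc 1 (d - 1), f e = ∑ e ∈ Icc 1 n, f e := by
  obtain ⟨d, rfl⟩ : ∃ d', d = d' + 1 := ⟨d - 1, by omega⟩
  have hIoc (a b : ℕ) : Icc (a + 1) b = Ioc a b := Icc_add_one_left_eq_Ioc a b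
  rw [Nat.add_sub_cancel, hIoc, hIoc 0, hIoc 0,
    ← sum_Ioc_consecutive f (Nat.zero_le (d + 1)) hdn, sum_Ioc_succ_top (Nat.zero_le d)]
  abel

theorem Polynomial.natDegree_pos_of_injective_eval {R : Type*} [Semiring R] [Nontrivial R]
    {f : R[X]} (hf : Injective fun a => f.eval a) : 0 < f.natDegree := by
  by_contra! h
  have hC := eq_C_of_natDegree_eq_zero (Nat.le_zero.1 h)
  exact zero_ne_one (hf (show f.eval 0 = f.eval 1 by rw [hC, eval_C, eval_C]))

theorem Polynomial.card_natDegree_mem_eq_sum {R : Type*} [Semiring R] [Finite R]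
    (s : Finset ℕ) (p : R[X] → Prop) :
    Nat.card {f : R[X] // f.natDegree ∈ s ∧ p f} =
      ∑ e ∈ s, Nat.card {f : R[X] // f.natDegree = e ∧ p f} := by
  have hfin (e : ℕ) : Finite {f : R[X] // f.natDegree = e ∧ p f} := by
    refine Finite.of_injective (fun f (i : Fin (e + 1)) => f.1.coeff i) fun f g h => ?_
    refine Subtype.ext (Polynomial.ext fun k => ?_)
    rcases lt_or_ge k (e + 1) with hk | hk
    · exact congrFun h ⟨k, hk⟩
    · rw [coeff_eq_zero_of_natDegree_lt (by omega), coeff_eq_zero_of_natDegree_lt (by omega)]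
  let bySigma : {f : R[X] // f.natDegree ∈ s ∧ p f} ≃
      Σ e : s, {f : R[X] // f.natDegree = e ∧ p f} :=
    { toFun := fun f => ⟨⟨_, f.2.1⟩, ⟨f.1, rfl, f.2.2⟩⟩
      invFun := fun f => ⟨f.2.1, by rw [f.2.2.1]; exact f.1.2, f.2.2.2⟩
      left_inv := fun _ => rfl
      right_inv := fun ⟨⟨_, _⟩, _, rfl, _⟩ => rfl }
  rw [Nat.card_congr bySigma, Nat.card_sigma,
    sum_coe_sort s fun e => Nat.card {f : R[X] // f.natDegree = e ∧ p f}]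

namespace FiniteField

variable {F : Type*} [Field F] [Fintype F]

theorem sum_pow_eq_ite (j : ℕ) :
    ∑ a : F, a ^ j = if j ≠ 0 ∧ Fintype.card F - 1 ∣ j then -1 else 0 := by
  classical
  rcases eq_or_ne j 0 with rfl | hj
  · simp
  · rw [Fintype.sum_eq_add_sum_subtype_ne _ 0, zero_pow hj, zero_add,
      ← unitsEquivNeZero.sum_comp]
    simp [sum_pow_units, hj]

theorem sum_pow_mul_eval {f : F[X]} (hf : f.natDegree < Fintype.card F) {l : ℕ}
    (hl : l < Fintype.card F - 1) :
    ∑ a : F, a ^ l * f.eval a = -f.coeff (Fintype.card F - 1 - l) := by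
  set q := Fintype.card F
  have hpow (k : ℕ) (hk : k < q) : (k + l ≠ 0 ∧ q - 1 ∣ k + l) ↔ k = q - 1 - l :=
    ⟨fun ⟨h0, hdvd⟩ => by have := Nat.eq_of_dvd_of_lt_two_mul h0 hdvd (by omega); omega,
      fun h => ⟨by omega, by rw [h, Nat.sub_add_cancel hl.le]⟩⟩
  calc ∑ a : F, a ^ l * f.eval a = ∑ k ∈ range q, f.coeff k * ∑ a : F, a ^ (k + l) := by
        simp_rw [eval_eq_sum_range' hf, mul_sum, pow_add]
        rw [sum_comm]
        exact sum_congr rfl fun k _ => sum_congr rfl fun a _ => by ring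
    _ = ∑ k ∈ range q, if k = q - 1 - l then -f.coeff k else 0 := by
        refine sum_congr rfl fun k hk => ?_
        rw [sum_pow_eq_ite, if_congr (hpow k (mem_range.1 hk)) rfl rfl]
        split_ifs <;> simp
    _ = -f.coeff (q - 1 - l) := by rw [sum_ite_eq', if_pos (mem_range.2 (by omega))]

theorem natDegree_lt_card_sub_one_of_bijective (hq : 2 < Fintype.card F) {f : F[X]}
    (hf : f.natDegree < Fintype.card F) (hbij : Bijective fun a => f.eval a) :
    f.natDegree < Fintype.card F - 1 := by
  have hsum : ∑ a : F, f.eval a = 0 := by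
    rw [hbij.sum_comp (fun a => a)]
    simpa using sum_pow_lt_card_sub_one (K := F) 1 (by omega)
  have hcoeff : f.coeff (Fintype.card F - 1) = 0 := by
    simpa [hsum] using (sum_pow_mul_eval hf (l := 0) (by omega)).symm
  have := natDegree_le_pred (by omega) hcoeff
  omega

theorem exists_natDegree_lt_card_eval_eq (g : F → F) :
    ∃ f : F[X], f.natDegree < Fintype.card F ∧ ∀ a, f.eval a = g a := by
  classical
  refine ⟨Lagrange.interpolate univ id g, ?_, fun a =>
    Lagrange.eval_interpolate_at_node g (Set.injOn_id _) (mem_univ a)⟩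
  by_cases h0 : Lagrange.interpolate univ id g = 0
  · rw [h0, natDegree_zero]
    exact Fintype.card_pos
  · rw [natDegree_lt_iff_degree_lt h0, ← card_univ]
    exact Lagrange.degree_interpolate_lt g (Set.injOn_id _)

theorem isPrimitiveRoot_of_forall_pow_eq (hq : 2 < Fintype.card F) {ω : F}
    (hω : ∀ a : F, a ≠ 0 → ∃ k : ℕ, ω ^ k = a) : IsPrimitiveRoot ω (Fintype.card F - 1) := by
  classical
  obtain ⟨a, -, ha⟩ := exists_mem_notMem_of_card_lt_card
    (card_le_two.trans_lt hq : ({0, 1} : Finset F).card < univ.card)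
  simp only [mem_insert, mem_singleton, not_or] at ha
  have hω0 : ω ≠ 0 := by
    rintro rfl
    obtain ⟨_ | k, hk⟩ := hω a ha.1
    exacts [ha.2 (by simpa using hk.symm), ha.1 (by simpa using hk.symm)]
  have horder : orderOf (Units.mk0 ω hω0) = Fintype.card F - 1 := by
    rw [orderOf_eq_card_of_forall_mem_zpowers, Nat.card_eq_fintype_card, Fintype.card_units]
    intro x
    obtain ⟨k, hk⟩ := hω x x.ne_zero
    exact ⟨k, Units.ext (by simpa using hk)⟩
  rw [← horder, ← orderOf_units]
  exact IsPrimitiveRoot.orderOf ω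

end FiniteField

namespace IsPrimitiveRoot

variable {F : Type*} [Field F] [Fintype F] {ζ : F}

@[simps!]
noncomputable def powEquivNeZero (hζ : IsPrimitiveRoot ζ (Fintype.card F - 1)) :
    Fin (Fintype.card F - 1) ≃ {a : F // a ≠ 0} :=
  have hq : Fintype.card F - 1 ≠ 0 := by have := Fintype.one_lt_card (α := F); omega
  haveI : NeZero (Fintype.card F - 1) := ⟨hq⟩
  Equiv.ofBijective (fun i => ⟨ζ ^ (i : ℕ), pow_ne_zero _ (hζ.ne_zero hq)⟩)
    ⟨fun i j h => Fin.ext (hζ.pow_inj i.isLt j.isLt (congrArg Subtype.val h)), fun a => by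
      obtain ⟨i, hi, h⟩ := hζ.eq_pow_of_pow_eq_one (FiniteField.pow_card_sub_one_eq_one _ a.2)
      exact ⟨⟨i, hi⟩, Subtype.ext h⟩⟩

theorem sum_pow_mul_apply_pow (hζ : IsPrimitiveRoot ζ (Fintype.card F - 1)) (φ : F → F)
    {l : ℕ} (hl : l ≠ 0) :
    ∑ i : Fin (Fintype.card F - 1), ζ ^ ((i : ℕ) * l) * φ (ζ ^ (i : ℕ)) =
      ∑ a : F, a ^ l * φ a := by
  classical
  rw [Fintype.sum_eq_add_sum_subtype_ne (fun a : F => a ^ l * φ a) 0, zero_pow hl, zero_mul,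
    zero_add, ← hζ.powEquivNeZero.sum_comp]
  simp [pow_mul]

theorem eq_of_eval_pow_eq (hζ : IsPrimitiveRoot ζ (Fintype.card F - 1))
    {f g : F[X]} (hf : f.natDegree < Fintype.card F) (hg : g.natDegree < Fintype.card F)
    (h₀ : f.coeff 0 = g.coeff 0)
    (h : ∀ i : Fin (Fintype.card F - 1), f.eval (ζ ^ (i : ℕ)) = g.eval (ζ ^ (i : ℕ))) :
    f = g := by
  refine eq_of_natDegree_lt_card_of_eval_eq f g injective_id (fun a => ?_) (max_lt hf hg)
  rcases eq_or_ne a 0 with rfl | ha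
  · simpa [coeff_zero_eq_eval_zero] using h₀
  · obtain ⟨i, hi⟩ := hζ.powEquivNeZero.surjective ⟨a, ha⟩
    have hia : ζ ^ (i : ℕ) = a := congrArg Subtype.val hi
    exact hia ▸ h i

theorem card_injective_eq_card_bijective_eval (hζ : IsPrimitiveRoot ζ (Fintype.card F - 1))
    (hq : 2 < Fintype.card F) (P : (Fin (Fintype.card F - 1) → F) → Prop) :
    Nat.card {x : Fin (Fintype.card F - 1) → F // Injective x ∧ (∀ i, x i ≠ 0) ∧ P x} =
      Nat.card {f : F[X] // f.natDegree < Fintype.card F - 1 ∧ f.coeff 0 = 0 ∧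
        (Bijective fun a => f.eval a) ∧ P fun i => f.eval (ζ ^ (i : ℕ))} := by
  have hvalues {f : F[X]} (h₀ : f.coeff 0 = 0) (hbij : Bijective fun a => f.eval a) :
      Injective (fun i : Fin (Fintype.card F - 1) => f.eval (ζ ^ (i : ℕ))) ∧
        ∀ i : Fin (Fintype.card F - 1), f.eval (ζ ^ (i : ℕ)) ≠ 0 :=
    ⟨fun i j h => hζ.powEquivNeZero.injective (Subtype.ext (hbij.injective h)),
      fun i h => (hζ.powEquivNeZero i).2 (hbij.injective
        (h.trans (by rw [← coeff_zero_eq_eval_zero, h₀])))⟩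
  refine (Nat.card_congr (Equiv.ofBijective (fun f => ⟨fun i => f.1.eval (ζ ^ (i : ℕ)),
    (hvalues f.2.2.1 f.2.2.2.1).1, (hvalues f.2.2.1 f.2.2.2.1).2, f.2.2.2.2⟩)
    ⟨fun f g h => ?_, fun x => ?_⟩)).symm
  · exact Subtype.ext (hζ.eq_of_eval_pow_eq (by omega) (by omega) (f.2.2.1.trans g.2.2.1.symm)
      fun i => congrFun (congrArg Subtype.val h) i)
  · obtain ⟨x, hinj, hx₀, hP⟩ := x
    obtain ⟨g, hgbij, hg₀, hgx⟩ :=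
      exists_bijective_extend_of_injective hζ.powEquivNeZero hinj hx₀
    obtain ⟨f, hfdeg, hfg⟩ := FiniteField.exists_natDegree_lt_card_eval_eq g
    have hfbij : Bijective fun a => f.eval a := by simpa [hfg] using hgbij
    have hfx : (fun i : Fin (Fintype.card F - 1) => f.eval (ζ ^ (i : ℕ))) = x := by
      ext i
      simpa [hfg] using hgx i
    exact ⟨⟨f, FiniteField.natDegree_lt_card_sub_one_of_bijective hq hfdeg hfbij,
      by rw [coeff_zero_eq_eval_zero, hfg, hg₀], hfbij, by rw [hfx]; exact hP⟩, Subtype.ext hfx⟩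

theorem forall_sum_pow_mul_eval_eq_zero_iff (hζ : IsPrimitiveRoot ζ (Fintype.card F - 1))
    {f : F[X]} (hf : f.natDegree < Fintype.card F - 1) {d : ℕ} (hd : d ≠ 0) :
    (∀ l ∈ Icc 1 (Fintype.card F - 1 - d),
        ∑ i : Fin (Fintype.card F - 1), ζ ^ ((i : ℕ) * l) * f.eval (ζ ^ (i : ℕ)) = 0) ↔
      f.natDegree < d := by
  have hsum (l : ℕ) (hl : l ∈ Icc 1 (Fintype.card F - 1 - d)) :
      ∑ i : Fin (Fintype.card F - 1), ζ ^ ((i : ℕ) * l) * f.eval (ζ ^ (i : ℕ)) =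
        -f.coeff (Fintype.card F - 1 - l) := by
    rw [mem_Icc] at hl
    exact (hζ.sum_pow_mul_apply_pow (f.eval ·) (by omega)).trans
      (FiniteField.sum_pow_mul_eval (by omega) (by omega))
  constructor
  · intro h
    by_contra! hle
    have hl : Fintype.card F - 1 - f.natDegree ∈ Icc 1 (Fintype.card F - 1 - d) :=
      mem_Icc.2 ⟨Nat.sub_pos_of_lt hf, by omega⟩
    have hlead := h _ hl
    rw [hsum _ hl, Nat.sub_sub_self hf.le, neg_eq_zero, coeff_natDegree,
      leadingCoeff_eq_zero] at hlead
    rw [hlead, natDegree_zero] at hle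
    omega
  · intro h l hl
    rw [hsum l hl, coeff_eq_zero_of_natDegree_lt (by rw [mem_Icc] at hl; omega), neg_zero]

theorem card_injective_eq_sum_card_natDegree_eq (hζ : IsPrimitiveRoot ζ (Fintype.card F - 1))
    (hq : 2 < Fintype.card F) {D : ℕ} (hD : D ≤ Fintype.card F - 1)
    (P : (Fin (Fintype.card F - 1) → F) → Prop)
    (hP : ∀ f : F[X], f.natDegree < Fintype.card F - 1 →
      (P (fun i => f.eval (ζ ^ (i : ℕ))) ↔ f.natDegree < D)) :
    Nat.card {x : Fin (Fintype.card F - 1) → F // Injective x ∧ (∀ i, x i ≠ 0) ∧ P x} =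
      ∑ e ∈ Icc 1 (D - 1), Nat.card {f : F[X] // f.natDegree = e ∧ f.coeff 0 = 0 ∧
        Bijective fun x => f.eval x} := by
  rw [hζ.card_injective_eq_card_bijective_eval hq, ← card_natDegree_mem_eq_sum]
  refine Nat.card_congr (Equiv.subtypeEquivRight fun f => ?_)
  rw [mem_Icc]
  constructor
  · rintro ⟨hf, h₀, hbij, hPf⟩
    have := natDegree_pos_of_injective_eval hbij.injective
    have := (hP f hf).1 hPf
    exact ⟨⟨by omega, by omega⟩, h₀, hbij⟩
  · rintro ⟨hf, h₀, hbij⟩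
    exact ⟨by omega, h₀, hbij, (hP f (by omega)).2 (by omega)⟩

end IsPrimitiveRoot

theorem stmt_13 {F : Type*} [Field F] [Fintype F] (q : ℕ) (hq : Fintype.card F = q)
    (ω : F) (hω : ∀ a : F, a ≠ 0 → ∃ k : ℕ, ω ^ k = a)
    (d m : ℕ) (hd1 : 1 ≤ d) (hd2 : d ≤ q - 3) (hm : m = q - 1 - d) :
    Nat.card {x : Fin (q - 1) → F // Function.Injective x ∧ (∀ i, x i ≠ 0) ∧
        ∀ l ∈ Finset.Icc 1 m, ∑ i : Fin (q - 1), ω ^ ((i : ℕ) * l) * x i = 0} =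
      Nat.card {σ : Equiv.Perm (Fin (q - 1)) //
        ∀ l ∈ Finset.Icc 1 m, ∑ i : Fin (q - 1), ω ^ ((i : ℕ) * l) * ω ^ ((σ i : ℕ)) = 0} ∧
    Nat.card {f : F[X] // f.natDegree = d ∧ f.coeff 0 = 0 ∧
        Function.Bijective fun x => f.eval x} +
      (∑ e ∈ Finset.Icc (d + 1) (q - 2),
        Nat.card {f : F[X] // f.natDegree = e ∧ f.coeff 0 = 0 ∧
          Function.Bijective fun x => f.eval x}) +
      Nat.card {x : Fin (q - 1) → F // Function.Injective x ∧ (∀ i, x i ≠ 0) ∧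
        ∀ l ∈ Finset.Icc 1 m, ∑ i : Fin (q - 1), ω ^ ((i : ℕ) * l) * x i = 0} =
      Nat.factorial (q - 1) := by
  subst hq hm
  have hq : 2 < Fintype.card F := by omega
  have hω' := FiniteField.isPrimitiveRoot_of_forall_pow_eq hq hω
  refine ⟨card_injective_eq_card_perm hω'.powEquivNeZero _, ?_⟩
  have hall := hω'.card_injective_eq_sum_card_natDegree_eq hq le_rfl (fun _ => True)
    fun f hf => iff_of_true trivial hf
  rw [card_injective_eq_card_perm hω'.powEquivNeZero,
    Nat.card_congr (Equiv.subtypeUnivEquiv fun _ => trivial), Nat.card_perm, Nat.card_fin] at hall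
  rw [hω'.card_injective_eq_sum_card_natDegree_eq hq (by omega) _ fun f hf =>
      hω'.forall_sum_pow_mul_eval_eq_zero_iff hf (by omega), hall,
    show Fintype.card F - 1 - 1 = Fintype.card F - 2 by omega]
  exact add_sum_Icc_add_sum_Icc_eq (fun e => Nat.card {f : F[X] // f.natDegree = e ∧
    f.coeff 0 = 0 ∧ Bijective fun x => f.eval x}) hd1 (by omega)
end
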